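/- arXiv:2511.04027 — 4 statements merged into one kernel-verified Lean document; each statement's English description precedes it below -/
import Mathlib

section
/- Let φ_{-1}(x) = (5 - √(25-4x))/2 on (-∞, 25/4], and let φ_{-1}^m denote the m-th iterate. Then for every x < 25/4, the limit ψ(x) = (3/2) lim_{m→∞} 5^m φ_{-1}^m(x) exists, ψ is strictly increasing on (-∞, 25/4), and 5·ψ(φ_{-1}(x)) = ψ(x) for all x < 25/4. -/
open Filter

noncomputable def phi (y : ℝ) : ℝ := (5 - Real.sqrt (25 - 4 * y)) / 2

lemma phi_le (x : ℝ) : phi x ≤ 5 / 2 := by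
  have := Real.sqrt_nonneg (25 - 4 * x); unfold phi; linarith

lemma abs_phi_le {x : ℝ} (hx : x ≤ 25 / 4) : |phi x| ≤ 2 / 5 * |x| := by
  have hs0 := Real.sqrt_nonneg (25 - 4 * x)
  have hs2 : Real.sqrt (25 - 4 * x) ^ 2 = 25 - 4 * x := Real.sq_sqrt (by linarith)
  set s := Real.sqrt (25 - 4 * x) with hs
  unfold phi
  rw [← hs]
  rcases le_total 0 x with h | h
  · have hs5 : s ≤ 5 := by nlinarith
    rw [abs_of_nonneg (by linarith : (0:ℝ) ≤ (5 - s) / 2), abs_of_nonneg h]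
    nlinarith
  · have hs5 : 5 ≤ s := by nlinarith
    rw [abs_of_nonpos (by linarith : (5 - s) / 2 ≤ (0:ℝ)), abs_of_nonpos h]
    nlinarith

lemma phi_lower {x : ℝ} (hx : x ≤ 25 / 4) : x ≤ 5 * phi x := by
  have hs0 := Real.sqrt_nonneg (25 - 4 * x)
  have hs2 : Real.sqrt (25 - 4 * x) ^ 2 = 25 - 4 * x := Real.sq_sqrt (by linarith)
  set s := Real.sqrt (25 - 4 * x)
  unfold phi
  nlinarith [sq_nonneg (s - 5)]

lemma phi_upper {x : ℝ} (hx : x ≤ 25 / 4) : 5 * phi x - x ≤ 4 / 25 * x ^ 2 := by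
  have hs0 := Real.sqrt_nonneg (25 - 4 * x)
  have hs2 : Real.sqrt (25 - 4 * x) ^ 2 = 25 - 4 * x := Real.sq_sqrt (by linarith)
  set s := Real.sqrt (25 - 4 * x)
  unfold phi
  nlinarith [mul_nonneg (mul_nonneg (sq_nonneg (s - 5)) hs0) (by linarith : (0:ℝ) ≤ s + 10)]

lemma iter_le {x : ℝ} (hx : x ≤ 25 / 4) (m : ℕ) : phi^[m] x ≤ 25 / 4 := by
  cases m with
  | zero => simpa
  | succ n =>
    rw [Function.iterate_succ_apply']
    exact (phi_le _).trans (by norm_num)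

lemma iter_abs {x : ℝ} (hx : x ≤ 25 / 4) (m : ℕ) : |phi^[m] x| ≤ (2 / 5) ^ m * |x| := by
  induction m with
  | zero => simp
  | succ n ih =>
    rw [Function.iterate_succ_apply']
    calc |phi (phi^[n] x)| ≤ 2 / 5 * |phi^[n] x| := abs_phi_le (iter_le hx n)
      _ ≤ 2 / 5 * ((2 / 5) ^ n * |x|) := by linarith
      _ = (2 / 5) ^ (n + 1) * |x| := by ring

noncomputable def fseq (x : ℝ) (m : ℕ) : ℝ := 5 ^ m * phi^[m] x

noncomputable def dseq (x : ℝ) (m : ℕ) : ℝ := fseq x (m + 1) - fseq x m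

lemma abs_dseq {x : ℝ} (hx : x ≤ 25 / 4) (m : ℕ) :
    |dseq x m| ≤ 4 / 25 * x ^ 2 * (4 / 5) ^ m := by
  have hy := iter_le hx m
  have hab := iter_abs hx m
  have h1 := phi_lower hy
  have h2 := phi_upper hy
  have hd : dseq x m = 5 ^ m * (5 * phi (phi^[m] x) - phi^[m] x) := by
    simp only [dseq, fseq, Function.iterate_succ_apply', pow_succ]; ring
  have h5 : (0:ℝ) ≤ 5 ^ m := by positivity
  rw [hd, abs_mul, abs_of_nonneg h5]
  have h3 : |5 * phi (phi^[m] x) - phi^[m] x| ≤ 4 / 25 * (phi^[m] x) ^ 2 := by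
    rw [abs_of_nonneg (by linarith)]; linarith
  have h4 : (phi^[m] x) ^ 2 ≤ ((2 / 5) ^ m * |x|) ^ 2 := by
    rw [← sq_abs]
    exact pow_le_pow_left₀ (abs_nonneg _) hab 2
  calc (5:ℝ) ^ m * |5 * phi (phi^[m] x) - phi^[m] x|
      ≤ 5 ^ m * (4 / 25 * ((2 / 5) ^ m * |x|) ^ 2) := by
        apply mul_le_mul_of_nonneg_left _ h5
        calc |5 * phi (phi^[m] x) - phi^[m] x| ≤ 4 / 25 * (phi^[m] x) ^ 2 := h3
          _ ≤ 4 / 25 * ((2 / 5) ^ m * |x|) ^ 2 := by linarith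
    _ = 4 / 25 * x ^ 2 * (4 / 5) ^ m := by
        rw [mul_pow, sq_abs,
          show (((2:ℝ)/5)^m) ^ 2 = ((4:ℝ)/25)^m by rw [sq, ← mul_pow]; norm_num,
          show ((4:ℝ)/5)^m = 5^m * ((4:ℝ)/25)^m by rw [← mul_pow]; norm_num]
        ring

lemma summable_dseq {x : ℝ} (hx : x ≤ 25 / 4) : Summable (dseq x) := by
  have hg : Summable (fun m : ℕ => 4 / 25 * x ^ 2 * (4 / 5 : ℝ) ^ m) :=
    (summable_geometric_of_lt_one (by norm_num) (by norm_num)).mul_left _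
  exact (Summable.of_nonneg_of_le (fun n => abs_nonneg _) (abs_dseq hx) hg).of_abs

noncomputable def Lfun (x : ℝ) : ℝ := x + ∑' m, dseq x m

lemma tendsto_fseq {x : ℝ} (hx : x ≤ 25 / 4) :
    Tendsto (fseq x) atTop (nhds (Lfun x)) := by
  have h := (summable_dseq hx).hasSum.tendsto_sum_nat
  have h2 : Tendsto (fun m => x + ∑ k ∈ Finset.range m, dseq x k) atTop
      (nhds (x + ∑' m, dseq x m)) := h.const_add x
  have heq : ∀ m, fseq x m = x + ∑ k ∈ Finset.range m, dseq x k := by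
    intro m
    have h0 : ∑ k ∈ Finset.range m, dseq x k = fseq x m - fseq x 0 :=
      Finset.sum_range_sub (fseq x) m
    have hf0 : fseq x 0 = x := by simp [fseq]
    rw [h0, hf0]; ring
  exact h2.congr (fun m => (heq m).symm)

lemma phi_iter_le {x : ℝ} (hx : x ≤ 25 / 4) : phi x ≤ 25 / 4 :=
  (phi_le x).trans (by norm_num)

lemma scaling {x : ℝ} (hx : x ≤ 25 / 4) : 5 * Lfun (phi x) = Lfun x := by
  have h1 : Tendsto (fun m => 5 * fseq (phi x) m) atTop (nhds (5 * Lfun (phi x))) :=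
    (tendsto_fseq (phi_iter_le hx)).const_mul 5
  have h2 : Tendsto (fun m => fseq x (m + 1)) atTop (nhds (Lfun x)) :=
    (tendsto_fseq hx).comp (tendsto_add_atTop_nat 1)
  have heq : (fun m => 5 * fseq (phi x) m) = fun m => fseq x (m + 1) := by
    funext m
    simp only [fseq, Function.iterate_succ_apply, pow_succ]; ring
  rw [heq] at h1
  exact tendsto_nhds_unique h1 h2

lemma scale_iter {x : ℝ} (hx : x ≤ 25 / 4) (n : ℕ) :
    Lfun x = 5 ^ n * Lfun (phi^[n] x) := by
  induction n with
  | zero => simp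
  | succ k ih =>
    rw [ih, Function.iterate_succ_apply', ← scaling (iter_le hx k), pow_succ]
    ring

lemma phi_strictMono {a b : ℝ} (hab : a < b) (hb : b ≤ 25 / 4) : phi a < phi b := by
  have h : Real.sqrt (25 - 4 * b) < Real.sqrt (25 - 4 * a) :=
    Real.sqrt_lt_sqrt (by linarith) (by linarith)
  unfold phi; linarith

lemma iter_strictMono {a b : ℝ} (hab : a < b) (hb : b ≤ 25 / 4) (n : ℕ) :
    phi^[n] a < phi^[n] b := by
  induction n with
  | zero => simpa
  | succ k ih =>
    rw [Function.iterate_succ_apply', Function.iterate_succ_apply']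
    exact phi_strictMono ih (iter_le hb k)

lemma phi_diff {a b c : ℝ} (hab : a < b) (hb : b ≤ 25 / 4)
    (ha1 : |a| ≤ c) (hb1 : |b| ≤ c) :
    (b - a) * (1 - 2 / 25 * c) ≤ 5 * (phi b - phi a) := by
  have ha : a ≤ 25 / 4 := hab.le.trans hb
  have hc : 0 ≤ c := (abs_nonneg a).trans ha1
  have ha0 := Real.sqrt_nonneg (25 - 4 * a)
  have hb0 := Real.sqrt_nonneg (25 - 4 * b)
  have ha2 : Real.sqrt (25 - 4 * a) ^ 2 = 25 - 4 * a := Real.sq_sqrt (by linarith)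
  have hb2 : Real.sqrt (25 - 4 * b) ^ 2 = 25 - 4 * b := Real.sq_sqrt (by linarith)
  set sa := Real.sqrt (25 - 4 * a)
  set sb := Real.sqrt (25 - 4 * b)
  have hba : sb ≤ sa := Real.sqrt_le_sqrt (by linarith)
  have haub : sa ≤ 5 + 2 / 5 * c := by
    have hma : -c ≤ a := (abs_le.mp ha1).1
    have h1 : 25 - 4 * a ≤ (5 + 2 / 5 * c) ^ 2 := by nlinarith
    calc sa ≤ Real.sqrt ((5 + 2 / 5 * c) ^ 2) := Real.sqrt_le_sqrt h1
      _ = 5 + 2 / 5 * c := Real.sqrt_sq (by linarith)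
  have hbub : sb ≤ 5 + 2 / 5 * c := by
    have hmb : -c ≤ b := (abs_le.mp hb1).1
    have h1 : 25 - 4 * b ≤ (5 + 2 / 5 * c) ^ 2 := by nlinarith
    calc sb ≤ Real.sqrt ((5 + 2 / 5 * c) ^ 2) := Real.sqrt_le_sqrt h1
      _ = 5 + 2 / 5 * c := Real.sqrt_sq (by linarith)
  have hdiff : phi b - phi a = (sa - sb) / 2 := by unfold phi; ring
  have hkey : b - a = (sa - sb) * (sa + sb) / 4 := by linear_combination (hb2 - ha2) / 4
  have hY : (sa + sb) * (1 - 2 / 25 * c) ≤ 10 := by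
    rcases le_or_gt (1 - 2 / 25 * c) 0 with h | h
    · nlinarith
    · nlinarith
  rw [hdiff, hkey]
  nlinarith [mul_nonneg (sub_nonneg.2 hba)
    (by linarith : (0:ℝ) ≤ 10 - (sa + sb) * (1 - 2 / 25 * c))]

lemma core_mono {a b : ℝ} (hab : a < b) (hb : b ≤ 25 / 4)
    (ha1 : |a| ≤ 1) (hb1 : |b| ≤ 1) : Lfun a < Lfun b := by
  have ha : a ≤ 25 / 4 := hab.le.trans hb
  have key : ∀ m : ℕ, phi^[m] a < phi^[m] b ∧
      (b - a) * (1 - 2 / 15 * (1 - (2 / 5) ^ m)) ≤ 5 ^ m * (phi^[m] b - phi^[m] a) := by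
    intro m
    induction m with
    | zero => exact ⟨hab, by simp⟩
    | succ k ih =>
      obtain ⟨hlt, hge⟩ := ih
      have hyb : phi^[k] b ≤ 25 / 4 := iter_le hb k
      have hpk : (0:ℝ) ≤ (2 / 5 : ℝ) ^ k := by positivity
      have hpk1 : ((2:ℝ) / 5) ^ k ≤ 1 := pow_le_one₀ (by norm_num) (by norm_num)
      have hya : |phi^[k] a| ≤ (2 / 5) ^ k := by
        calc |phi^[k] a| ≤ (2 / 5) ^ k * |a| := iter_abs ha k
          _ ≤ (2 / 5) ^ k * 1 := mul_le_mul_of_nonneg_left ha1 hpk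
          _ = (2 / 5) ^ k := mul_one _
      have hyb' : |phi^[k] b| ≤ (2 / 5) ^ k := by
        calc |phi^[k] b| ≤ (2 / 5) ^ k * |b| := iter_abs hb k
          _ ≤ (2 / 5) ^ k * 1 := mul_le_mul_of_nonneg_left hb1 hpk
          _ = (2 / 5) ^ k := mul_one _
      refine ⟨?_, ?_⟩
      · rw [Function.iterate_succ_apply', Function.iterate_succ_apply']
        exact phi_strictMono hlt hyb
      · have hstep := phi_diff hlt hyb hya hyb'
        have hpow : (0:ℝ) < 5 ^ k := by positivity
        have e1 : (5:ℝ) ^ (k + 1) * (phi^[k + 1] b - phi^[k + 1] a)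
            = 5 ^ k * (5 * (phi (phi^[k] b) - phi (phi^[k] a))) := by
          rw [Function.iterate_succ_apply', Function.iterate_succ_apply', pow_succ]; ring
        rw [e1]
        have h2 : 5 ^ k * ((phi^[k] b - phi^[k] a) * (1 - 2 / 25 * (2 / 5) ^ k))
            ≤ 5 ^ k * (5 * (phi (phi^[k] b) - phi (phi^[k] a))) :=
          mul_le_mul_of_nonneg_left hstep hpow.le
        have hba0 : (0:ℝ) ≤ b - a := by linarith
        have hps : ((2:ℝ) / 5) ^ (k + 1) = 2 / 5 * (2 / 5) ^ k := by
          rw [pow_succ]; ring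
        have hg : (b - a) * (1 - 2 / 15 * (1 - (2 / 5) ^ (k + 1)))
            ≤ (5 ^ k * (phi^[k] b - phi^[k] a)) * (1 - 2 / 25 * (2 / 5) ^ k) := by
          rw [hps]
          nlinarith [mul_nonneg (sub_nonneg.2 hge)
              (by nlinarith : (0:ℝ) ≤ 1 - 2 / 25 * (2 / 5) ^ k),
            mul_nonneg (mul_nonneg hba0 hpk) (sub_nonneg.2 hpk1)]
        calc (b - a) * (1 - 2 / 15 * (1 - (2 / 5) ^ (k + 1)))
            ≤ (5 ^ k * (phi^[k] b - phi^[k] a)) * (1 - 2 / 25 * (2 / 5) ^ k) := hg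
          _ = 5 ^ k * ((phi^[k] b - phi^[k] a) * (1 - 2 / 25 * (2 / 5) ^ k)) := by ring
          _ ≤ _ := h2
  have hlim : (b - a) * (13 / 15) ≤ Lfun b - Lfun a := by
    have ht : Tendsto (fun m => fseq b m - fseq a m) atTop (nhds (Lfun b - Lfun a)) :=
      (tendsto_fseq hb).sub (tendsto_fseq ha)
    refine ge_of_tendsto' ht ?_
    intro m
    obtain ⟨-, h⟩ := key m
    have hpk : (0:ℝ) ≤ (2 / 5 : ℝ) ^ m := by positivity
    have hpk1 : ((2:ℝ) / 5) ^ m ≤ 1 := pow_le_one₀ (by norm_num) (by norm_num)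
    have hba0 : (0:ℝ) ≤ b - a := by linarith
    have he : fseq b m - fseq a m = 5 ^ m * (phi^[m] b - phi^[m] a) := by
      simp only [fseq]; ring
    rw [he]
    nlinarith
  nlinarith

lemma Lfun_mono {a b : ℝ} (hab : a < b) (hb : b < 25 / 4) : Lfun a < Lfun b := by
  have ha : a ≤ 25 / 4 := by linarith
  obtain ⟨n, hn⟩ := exists_pow_lt_of_lt_one
    (show (0:ℝ) < 1 / (|a| + |b| + 1) by positivity) (show (2:ℝ) / 5 < 1 by norm_num)
  have hM : (0:ℝ) < |a| + |b| + 1 := by positivity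
  have hn' : (2 / 5 : ℝ) ^ n * (|a| + |b| + 1) < 1 := by
    have := (lt_div_iff₀ hM).mp hn
    linarith
  have hpk : (0:ℝ) ≤ (2 / 5 : ℝ) ^ n := by positivity
  have hna : |phi^[n] a| ≤ 1 := by
    have h1 := iter_abs ha n
    nlinarith [abs_nonneg a, abs_nonneg b]
  have hnb : |phi^[n] b| ≤ 1 := by
    have h1 := iter_abs hb.le n
    nlinarith [abs_nonneg a, abs_nonneg b]
  have hcore := core_mono (iter_strictMono hab hb.le n) (iter_le hb.le n) hna hnb
  have h5 : (0:ℝ) < 5 ^ n := by positivity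
  rw [scale_iter ha n, scale_iter hb.le n]
  exact mul_lt_mul_of_pos_left hcore h5

/-- existence of the function `ψ(x) = (3/2) lim 5^m φ_{-1}^m(x)`,
its strict monotonicity on `(-∞, 25/4)`, and the scaling identity
`5 ψ(φ_{-1}(x)) = ψ(x)`. -/
theorem psi_exists_strictMono_scaling :
    ∃ ψ : ℝ → ℝ,
      (∀ x < (25 : ℝ) / 4,
        Filter.Tendsto
          (fun m : ℕ => (5 : ℝ) ^ m *
            (fun y : ℝ => (5 - Real.sqrt (25 - 4 * y)) / 2)^[m] x)
          Filter.atTop (nhds (2 / 3 * ψ x))) ∧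
      StrictMonoOn ψ (Set.Iio ((25 : ℝ) / 4)) ∧
      (∀ x < (25 : ℝ) / 4, 5 * ψ ((5 - Real.sqrt (25 - 4 * x)) / 2) = ψ x) := by
  refine ⟨fun x => 3 / 2 * Lfun x, ?_, ?_, ?_⟩
  · intro x hx
    have h := tendsto_fseq hx.le
    have he : 2 / 3 * (3 / 2 * Lfun x) = Lfun x := by ring
    rw [he]
    exact h
  · intro x hx y hy hxy
    have := Lfun_mono hxy (Set.mem_Iio.mp hy)
    linarith
  · intro x hx
    have h := scaling hx.le
    show 5 * (3 / 2 * Lfun (phi x)) = 3 / 2 * Lfun x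
    linarith
end

section
/- For α ∈ ℝ \ {2,5,6}, define the 3×3 matrix P_α^1 = (1/((2-α)(5-α))) · [[(2-α)(5-α), 0, 0], [4-α, 4-α, 2], [4-α, 2, 4-α]]. Then P_α^1 has eigenvalues 1, (6-α)/((2-α)(5-α)), and 1/(5-α); in particular P_α^1 is invertible. -/
/-!
Dividing by `(2 - α)(5 - α)` turns `P_α^1` into a matrix of the shape `!![1, 0, 0; a, b, c; a, c, b]`.
Such a matrix fixes `e₁`, and on the quotient by `e₁` it acts as the symmetric block
`!![b, c; c, b]`, whose eigenvectors `(1, 1)` and `(1, -1)` give the eigenvalues `b + c` and `b - c`.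
With `b = (4 - α)/((2 - α)(5 - α))` and `c = 2/((2 - α)(5 - α))` these are the two stated values.
-/

open Polynomial

section UnitRowSwapBlock

variable {R : Type*} [CommRing R]

theorem charpoly_unitRow_swapBlock (a b c : R) :
    (!![1, 0, 0; a, b, c; a, c, b]).charpoly = (X - C 1) * (X - C (b + c)) * (X - C (b - c)) := by
  rw [Matrix.charpoly, Matrix.det_fin_three]
  simp only [Fin.isValue, Matrix.charmatrix_apply_eq, Matrix.of_apply, Matrix.cons_val',
    Matrix.cons_val_zero, Matrix.cons_val_fin_one, map_one, Matrix.cons_val_one, Matrix.cons_val,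
    ne_eq, Fin.reduceEq, not_false_eq_true, Matrix.charmatrix_apply_ne, map_zero, map_add, map_sub]
  ring

theorem det_unitRow_swapBlock (a b c : R) :
    (!![1, 0, 0; a, b, c; a, c, b]).det = (b + c) * (b - c) := by
  rw [Matrix.det_fin_three]
  simp only [Fin.isValue, Matrix.of_apply, Matrix.cons_val', Matrix.cons_val_zero,
    Matrix.cons_val_fin_one, Matrix.cons_val_one, Matrix.cons_val]
  ring

end UnitRowSwapBlock

section ScaledUnitRowSwapBlock

variable {K : Type*} [Field K] {d : K}

theorem inv_smul_unitRow_swapBlock (hd : d ≠ 0) (a b c : K) :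
    d⁻¹ • !![d, 0, 0; a, b, c; a, c, b] = !![1, 0, 0; a / d, b / d, c / d; a / d, c / d, b / d] := by
  ext i j
  fin_cases i <;> fin_cases j <;> simp [hd, div_eq_inv_mul]

theorem charpoly_inv_smul_unitRow_swapBlock (hd : d ≠ 0) (a b c : K) :
    (d⁻¹ • !![d, 0, 0; a, b, c; a, c, b]).charpoly =
      (X - C 1) * (X - C ((b + c) / d)) * (X - C ((b - c) / d)) := by
  rw [inv_smul_unitRow_swapBlock hd, charpoly_unitRow_swapBlock, add_div, sub_div]

theorem det_inv_smul_unitRow_swapBlock (hd : d ≠ 0) (a b c : K) :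
    (d⁻¹ • !![d, 0, 0; a, b, c; a, c, b]).det = (b + c) / d * ((b - c) / d) := by
  rw [inv_smul_unitRow_swapBlock hd, det_unitRow_swapBlock, add_div, sub_div]

end ScaledUnitRowSwapBlock

/-- the decimation matrix `P_α^1` has eigenvalues
`1, (6-α)/((2-α)(5-α)), 1/(5-α)`; in particular it is invertible. -/
theorem decimation_matrix_eigenvalues (α : ℝ) (h2 : α ≠ 2) (h5 : α ≠ 5) (h6 : α ≠ 6)
    (P : Matrix (Fin 3) (Fin 3) ℝ)
    (hP : P = ((2 - α) * (5 - α))⁻¹ •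
      !![(2 - α) * (5 - α), 0, 0; 4 - α, 4 - α, 2; 4 - α, 2, 4 - α]) :
    P.charpoly = (X - C 1) * (X - C ((6 - α) / ((2 - α) * (5 - α)))) *
      (X - C (1 / (5 - α))) ∧ P.det ≠ 0 := by
  have h2' : 2 - α ≠ 0 := sub_ne_zero.mpr (Ne.symm h2)
  have h5' : 5 - α ≠ 0 := sub_ne_zero.mpr (Ne.symm h5)
  have h6' : 6 - α ≠ 0 := sub_ne_zero.mpr (Ne.symm h6)
  have hd : (2 - α) * (5 - α) ≠ 0 := mul_ne_zero h2' h5'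
  have hsum : (4 - α + 2) / ((2 - α) * (5 - α)) = (6 - α) / ((2 - α) * (5 - α)) := by ring
  have hdiff : (4 - α - 2) / ((2 - α) * (5 - α)) = 1 / (5 - α) := by field_simp; ring
  subst hP
  refine ⟨?_, ?_⟩
  · rw [charpoly_inv_smul_unitRow_swapBlock hd, hsum, hdiff]
  · rw [det_inv_smul_unitRow_swapBlock hd, hsum, hdiff]
    exact mul_ne_zero (div_ne_zero h6' hd) (one_div_ne_zero h5')
end

section
/- Let u: V_* → ℝ satisfy the Sierpinski gasket eigenfunction extension rule with parameters λ_m ∈ (0,2) for m ≥ 1 where λ_m = Φ(λ_{m+1}) and Φ(x) = x(5-x). If (4-λ_0) u(p_1) - 2(u(p_2) + u(p_3)) = 0, where λ_0 = Φ(λ_1), then (4-λ_1) u(p_1) - 2(u(p_{12}) + u(p_{13})) = 0, where u(p_{1j}) = ((4-λ_1)(u(p_1)+u(p_j)) + 2 u(p_k))/((2-λ_1)(5-λ_1)) for {j,k} = {2,3}. -/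
/-- the vanishing of `(4-λ_0)u(p_1) - 2(u(p_2)+u(p_3))` propagates one
level under the Sierpinski gasket extension rule. -/
theorem normal_derivative_propagation (lam0 lam1 u1 u2 u3 : ℝ)
    (h1 : lam1 ∈ Set.Ioo (0 : ℝ) 2) (h0 : lam0 = lam1 * (5 - lam1))
    (h : (4 - lam0) * u1 - 2 * (u2 + u3) = 0) :
    (4 - lam1) * u1 -
      2 * (((4 - lam1) * (u1 + u2) + 2 * u3) / ((2 - lam1) * (5 - lam1)) +
           ((4 - lam1) * (u1 + u3) + 2 * u2) / ((2 - lam1) * (5 - lam1))) = 0 := by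
  obtain ⟨h1a, h1b⟩ := h1
  have h2 : (2 - lam1) ≠ 0 := by linarith
  have h5 : (5 - lam1) ≠ 0 := by linarith
  have hd : (2 - lam1) * (5 - lam1) ≠ 0 := mul_ne_zero h2 h5
  subst h0
  field_simp
  nlinarith [h, sq_nonneg lam1]
end

section
/- On the Sierpinski gasket, for any u in the domain of the standard Laplacian Δ and any pair of distinct i, j ∈ {1,2,3}, the matching condition (d(u∘F_i))_{p_j} + (d(u∘F_j))_{p_i} = 0 holds at the point p_{ij} = F_i p_j = F_j p_i, provided Δu(p_{ij}) exists. -/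
open Filter

/-- the matching condition for normal derivatives at the junction
point `p_{ij} = F_i p_j = F_j p_i` of the Sierpinski gasket:
`(d(u∘F_i))_{p_j} + (d(u∘F_j))_{p_i} = 0`, provided `Δu(p_{ij})` exists. -/
theorem normal_derivative_matching
    (p : Fin 3 → ℝ × ℝ) (hp : Function.Injective p)
    (F : Fin 3 → ℝ × ℝ → ℝ × ℝ)
    (hF : ∀ i x, F i x = (1 / 2 : ℝ) • (x + p i))
    (u : ℝ × ℝ → ℝ)
    (i j k : Fin 3) (hij : i ≠ j) (hik : i ≠ k) (hjk : j ≠ k)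
    -- existence of the pointwise Laplacian at `p_{ij} = F_i p_j`:
    (hΔ : ∃ L : ℝ, Tendsto (fun m : ℕ => (3 / 2 : ℝ) * 5 ^ (m + 1) *
      (u (F i ((F j)^[m] (p k))) + u (F i ((F j)^[m] (p i))) +
       u (F j ((F i)^[m] (p k))) + u (F j ((F i)^[m] (p j))) -
       4 * u (F i (p j)))) atTop (nhds L))
    (a b : ℝ)
    (ha : Tendsto (fun m : ℕ => (5 / 3 : ℝ) ^ m *
      (2 * u (F i (p j)) - u (F i ((F j)^[m] (p i))) -
        u (F i ((F j)^[m] (p k))))) atTop (nhds a))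
    (hb : Tendsto (fun m : ℕ => (5 / 3 : ℝ) ^ m *
      (2 * u (F j (p i)) - u (F j ((F i)^[m] (p j))) -
        u (F j ((F i)^[m] (p k))))) atTop (nhds b)) :
    a + b = 0 := by
  obtain ⟨L, hL⟩ := hΔ
  have hpe : F j (p i) = F i (p j) := by
    rw [hF, hF, add_comm]
  have hsum : Tendsto (fun m : ℕ => (5 / 3 : ℝ) ^ m *
      (2 * u (F i (p j)) - u (F i ((F j)^[m] (p i))) -
        u (F i ((F j)^[m] (p k)))) + (5 / 3 : ℝ) ^ m *
      (2 * u (F j (p i)) - u (F j ((F i)^[m] (p j))) -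
        u (F j ((F i)^[m] (p k))))) atTop (nhds (a + b)) := ha.add hb
  have hzero : Tendsto (fun m : ℕ => (-(2 / 15) : ℝ) * ((1 / 3 : ℝ) ^ m *
      ((3 / 2 : ℝ) * 5 ^ (m + 1) *
      (u (F i ((F j)^[m] (p k))) + u (F i ((F j)^[m] (p i))) +
       u (F j ((F i)^[m] (p k))) + u (F j ((F i)^[m] (p j))) -
       4 * u (F i (p j)))))) atTop (nhds ((-(2 / 15) : ℝ) * (0 * L))) := by
    refine Tendsto.const_mul _ (Tendsto.mul ?_ hL)
    exact tendsto_pow_atTop_nhds_zero_of_lt_one (by norm_num) (by norm_num)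
  have hfun : (fun m : ℕ => (5 / 3 : ℝ) ^ m *
      (2 * u (F i (p j)) - u (F i ((F j)^[m] (p i))) -
        u (F i ((F j)^[m] (p k)))) + (5 / 3 : ℝ) ^ m *
      (2 * u (F j (p i)) - u (F j ((F i)^[m] (p j))) -
        u (F j ((F i)^[m] (p k))))) = (fun m : ℕ => (-(2 / 15) : ℝ) * ((1 / 3 : ℝ) ^ m *
      ((3 / 2 : ℝ) * 5 ^ (m + 1) *
      (u (F i ((F j)^[m] (p k))) + u (F i ((F j)^[m] (p i))) +
       u (F j ((F i)^[m] (p k))) + u (F j ((F i)^[m] (p j))) -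
       4 * u (F i (p j)))))) := by
    funext m
    rw [hpe]
    have h3 : (3 : ℝ) ^ m ≠ 0 := by positivity
    rw [div_pow, div_pow]
    field_simp
    ring
  rw [hfun] at hsum
  have := tendsto_nhds_unique hsum hzero
  linarith
end
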